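/- arXiv:1507.03376 — 4 statements merged into one kernel-verified Lean document; each statement's English description precedes it below -/
import Mathlib

section
/- If G is a connected graph, then the cube of G (the graph on the same vertex set where two distinct vertices are adjacent iff their distance in G is at most 3) contains a Hamiltonian cycle. -/
/-! Sekanina's argument. Call a finite vertex set `s` connected from `r ∈ s` if every vertex of
`s` is reachable from `r` along `G`-edges inside `s`. Then `G³` has a path through exactly the
vertices of `s` that starts at `r` and ends within distance one of `r`. Induct on `|s|`: pick a
neighbour `c` of `r` in `s` and let `s₁` be the set of vertices reachable from `c` inside
`s \ {r}`. Both `s₁` (from `c`) and `s \ s₁` (from `r`) are connected, and the path for `s \ s₁`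
followed by the reversed path for `s₁` is again such a path: its two junction vertices are within
distance `1 + 1 + 1` of each other, via `r` and `c`. For `s = V` the two ends of the path are
adjacent in `G`, so the path closes into a Hamiltonian cycle as soon as `|V| ≥ 3`. -/

/-- The cube of a graph: same vertex set, distinct vertices adjacent iff
their distance in `G` is at most 3. -/
def SimpleGraph.cube {V : Type*} (G : SimpleGraph V) : SimpleGraph V :=
  SimpleGraph.fromRel (fun u v => G.dist u v ≤ 3)

open Relation Finset

namespace SimpleGraph

variable {V : Type*} (G : SimpleGraph V)

def ReachIn (s : Finset V) : V → V → Prop :=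
  ReflTransGen fun a b => G.Adj a b ∧ a ∈ s ∧ b ∈ s

open scoped Classical in
noncomputable def componentIn (s : Finset V) (c : V) : Finset V :=
  {y ∈ s | G.ReachIn s c y}

variable {G}

lemma cube_adj_of_edist_le {u v : V} (hne : u ≠ v) (h : G.edist u v ≤ 3) : G.cube.Adj u v := by
  rw [cube, fromRel_adj]
  exact ⟨hne, Or.inl (ENat.toNat_le_of_le_natCast h)⟩

lemma Walk.IsHamiltonian.isHamiltonianCycle_cons [Fintype V] [DecidableEq V] {u v : V}
    {p : G.Walk u v} (hp : p.IsHamiltonian) (h : G.Adj v u) (hcard : 3 ≤ Fintype.card V) :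
    (Walk.cons h p).IsHamiltonianCycle := by
  have hlen := hp.length_eq
  rw [isHamiltonianCycle_iff_isCycle_and_length_eq, cons_isCycle_iff, length_cons]
  refine ⟨⟨hp.isPath, fun he => ?_⟩, by omega⟩
  have := hp.isPath.length_eq_one_of_mem_edges (Sym2.eq_swap ▸ he)
  omega

open scoped Classical in
lemma mem_componentIn {s : Finset V} {c y : V} :
    y ∈ G.componentIn s c ↔ y ∈ s ∧ G.ReachIn s c y :=
  mem_filter

lemma Reachable.reachIn_univ [Fintype V] {u v : V} (h : G.Reachable u v) :
    G.ReachIn univ u v :=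
  ReflTransGen.mono (fun _ _ hab => ⟨hab, mem_univ _, mem_univ _⟩) _ _
    ((reachable_iff_reflTransGen u v).mp h)

lemma ReachIn.componentIn {s : Finset V} {c y : V} (h : G.ReachIn s c y) :
    G.ReachIn (G.componentIn s c) c y := by
  induction h with
  | refl => exact .refl
  | @tail b y hcb hby ih =>
    have hb : b ∈ G.componentIn s c := mem_componentIn.2 ⟨hby.2.1, hcb⟩
    have hy : y ∈ G.componentIn s c := mem_componentIn.2 ⟨hby.2.2, hcb.tail hby⟩
    exact ih.tail ⟨hby.1, hb, hy⟩

lemma ReachIn.sdiff_componentIn [DecidableEq V] {s : Finset V} {r c y : V} (h : G.ReachIn s r y)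
    (hy : y ∉ G.componentIn (s.erase r) c) :
    G.ReachIn (s \ G.componentIn (s.erase r) c) r y := by
  induction h with
  | refl => exact .refl
  | @tail b y _ hby ih =>
    obtain ⟨hadj, hbs, hys⟩ := hby
    by_cases hyr : y = r
    · subst hyr
      exact .refl
    by_cases hb : b ∈ G.componentIn (s.erase r) c
    · obtain ⟨hbs', hcb⟩ := mem_componentIn.1 hb
      have hys' : y ∈ s.erase r := mem_erase.2 ⟨hyr, hys⟩
      exact absurd (mem_componentIn.2 ⟨hys', hcb.tail ⟨hadj, hbs', hys'⟩⟩) hy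
    · exact (ih hb).tail ⟨hadj, mem_sdiff.2 ⟨hbs, hb⟩, mem_sdiff.2 ⟨hys, hy⟩⟩

lemma exists_cube_path_join [DecidableEq V] {s t : Finset V} {r c z z' : V} (hrc : G.Adj r c)
    (hst : Disjoint s t) (hz : G.edist r z ≤ 1) (p : G.cube.Walk r z) (hp : p.IsPath)
    (hps : p.support.toFinset = s) (hz' : G.edist c z' ≤ 1) (q : G.cube.Walk c z')
    (hq : q.IsPath) (hqt : q.support.toFinset = t) :
    ∃ w : G.cube.Walk r c, w.IsPath ∧ w.support.toFinset = s ∪ t := by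
  have hdisj : p.support.Disjoint q.support := by
    rw [← hps, ← hqt] at hst
    exact List.disjoint_toFinset_iff_disjoint.1 hst
  have hzz' : G.cube.Adj z z' := by
    refine cube_adj_of_edist_le (fun h => hdisj p.end_mem_support (h ▸ q.end_mem_support)) ?_
    calc G.edist z z' ≤ G.edist z r + G.edist r c + G.edist c z' :=
          G.edist_triangle.trans (add_le_add_left G.edist_triangle _)
      _ ≤ 1 + 1 + 1 := by
          gcongr
          · rwa [edist_comm]
          · rw [edist_eq_one_iff_adj.2 hrc]
      _ = 3 := by norm_num
  refine ⟨p.append (.cons hzz' q.reverse), ?_, ?_⟩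
  · rw [Walk.isPath_def, Walk.support_append, Walk.support_cons, List.tail_cons,
      Walk.support_reverse, List.nodup_append']
    exact ⟨hp.support_nodup, List.nodup_reverse.2 hq.support_nodup,
      fun a ha hb => hdisj ha (List.mem_reverse.1 hb)⟩
  · simp [Walk.support_append, hps, hqt]

theorem exists_cube_path_of_reachIn [DecidableEq V] (s : Finset V) {r : V} (hr : r ∈ s)
    (hs : ∀ x ∈ s, G.ReachIn s r x) :
    ∃ z, G.edist r z ≤ 1 ∧ ∃ w : G.cube.Walk r z, w.IsPath ∧ w.support.toFinset = s := by
  induction s using Finset.strongInduction generalizing r with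
  | H s ih =>
  by_cases hc : ∃ c ∈ s, G.Adj r c
  swap
  · have hsr : s = {r} := by
      refine eq_singleton_iff_unique_mem.2 ⟨hr, fun x hx => ?_⟩
      rcases (hs x hx).cases_head with hrx | ⟨c, ⟨hrc, -, hcs⟩, -⟩
      · exact hrx.symm
      · exact absurd ⟨c, hcs, hrc⟩ hc
    subst hsr
    exact ⟨r, by simp, .nil, .nil, by simp⟩
  obtain ⟨c, hcs, hrc⟩ := hc
  set s₁ := G.componentIn (s.erase r) c
  have hs₁ : s₁ ⊆ s.erase r := fun y hy => (mem_componentIn.1 hy).1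
  have hcs₁ : c ∈ s₁ := mem_componentIn.2 ⟨mem_erase.2 ⟨hrc.ne', hcs⟩, .refl⟩
  have hrs₁ : r ∉ s₁ := fun h => (mem_erase.1 (hs₁ h)).1 rfl
  obtain ⟨z₁, hz₁, w₁, hw₁, hw₁s⟩ := ih s₁ (hs₁.trans_ssubset (erase_ssubset hr)) hcs₁
    fun y hy => (mem_componentIn.1 hy).2.componentIn
  obtain ⟨z, hz, w, hw, hws⟩ := ih (s \ s₁)
    (sdiff_ssubset (hs₁.trans (erase_subset _ _)) ⟨c, hcs₁⟩) (mem_sdiff.2 ⟨hr, hrs₁⟩)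
    fun y hy => (hs y (mem_sdiff.1 hy).1).sdiff_componentIn (mem_sdiff.1 hy).2
  obtain ⟨p, hp, hps⟩ :=
    exists_cube_path_join hrc sdiff_disjoint hz w hw hws hz₁ w₁ hw₁ hw₁s
  refine ⟨c, (edist_eq_one_iff_adj.2 hrc).le, p, hp, ?_⟩
  rw [hps, sdiff_union_of_subset (hs₁.trans (erase_subset _ _))]

end SimpleGraph

open SimpleGraph in
/-- If `G` is a finite connected graph with at least 3 vertices, then `G³`
contains a Hamiltonian cycle. -/
theorem cube_hamiltonian_cycle {V : Type*} [Fintype V] [DecidableEq V]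
    (G : SimpleGraph V) (hG : G.Connected) (h3 : 3 ≤ Fintype.card V) :
    ∃ (v : V) (c : G.cube.Walk v v), c.IsHamiltonianCycle := by
  obtain ⟨r⟩ := hG.nonempty
  obtain ⟨z, hz, w, hw, hws⟩ := exists_cube_path_of_reachIn Finset.univ (Finset.mem_univ r)
    fun x _ => (hG r x).reachIn_univ
  have hwH : w.IsHamiltonian :=
    hw.isHamiltonian_of_mem fun x => List.mem_toFinset.1 (hws ▸ Finset.mem_univ x)
  have hzr : z ≠ r := by
    rintro rfl
    have hnil : w = .nil := congrArg Subtype.val (Path.loop_eq ⟨w, hw⟩)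
    have hlen := hwH.length_eq
    rw [hnil, Walk.length_nil] at hlen
    omega
  have hrz : G.Adj r z := (edist_le_one_iff_adj_or_eq.1 hz).resolve_right hzr.symm
  have hzr' : G.cube.Adj z r :=
    cube_adj_of_edist_le hzr (by rw [edist_comm, edist_eq_one_iff_adj.2 hrz]; norm_num)
  exact ⟨z, .cons hzr' w, hwH.isHamiltonianCycle_cons hzr' h3⟩
end

section
/- If G is a connected graph with n vertices, then there exists an enumeration v_1, v_2, ..., v_n of the vertices of G such that dist_G(v_i, v_{i+1}) ≤ 3 for all 1 ≤ i < n. -/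
/-!
Induct on a vertex set `S` that is connected through `u`, and build an enumeration of `S`
that starts at `u`, ends at `u` or at a neighbour of `u`, and has consecutive vertices at
distance at most `3`. Pick a neighbour `c` of `u` in `S` and let `C` be the component of `c`
in `S \ {u}`. The sets `C` (rooted at `c`) and `S \ C` (rooted at `u`) are smaller and still
connected, so they have such enumerations; listing `S \ C` forwards and then `C` backwards
gives one for `S`: the seam passes through `u` and `c`, so it has length at most `3`, and the
new last vertex is `c`.
-/

namespace List

theorem IsChain.exists_equiv_fin {α : Type*} [Fintype α] {R : α → α → Prop} {l : List α}
    (hR : l.IsChain R) (hl : l.Nodup) (hmem : ∀ x, x ∈ l) :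
    ∃ e : Fin (Fintype.card α) ≃ α,
      ∀ (i : ℕ) (h : i + 1 < Fintype.card α), R (e ⟨i, Nat.lt_of_succ_lt h⟩) (e ⟨i + 1, h⟩) := by
  classical
  let e := hl.getEquivOfForallMemList l hmem
  have hlen : l.length = Fintype.card α := by simpa using Fintype.card_congr e
  refine ⟨(finCongr hlen.symm).trans e, fun i h => ?_⟩
  simpa [e, Nodup.getEquivOfForallMemList] using isChain_iff_getElem.1 hR i (hlen ▸ h)

end List

namespace SimpleGraph

variable {V : Type*} (G : SimpleGraph V)

def ReachableIn (s : Set V) (u v : V) : Prop :=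
  ∃ p : G.Walk u v, ∀ z ∈ p.support, z ∈ s

variable {G}

namespace ReachableIn

variable {s t : Set V} {u v w : V}

theorem refl (hu : u ∈ s) : G.ReachableIn s u u :=
  ⟨.nil, by simpa using hu⟩

theorem mem_right (h : G.ReachableIn s u v) : v ∈ s :=
  h.elim fun p hp => hp v p.end_mem_support

theorem mono (h : G.ReachableIn s u v) (hst : s ⊆ t) : G.ReachableIn t u v :=
  h.elim fun p hp => ⟨p, fun z hz => hst (hp z hz)⟩

theorem symm (h : G.ReachableIn s u v) : G.ReachableIn s v u :=
  h.elim fun p hp => ⟨p.reverse, fun z hz => hp z (by simpa using hz)⟩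

theorem cons (huv : G.Adj u v) (hu : u ∈ s) (h : G.ReachableIn s v w) : G.ReachableIn s u w :=
  h.elim fun p hp => ⟨.cons huv p, by simpa [hu] using hp⟩

theorem trans_adj (h : G.ReachableIn s u v) (hvw : G.Adj v w) (hw : w ∈ s) :
    G.ReachableIn s u w :=
  (cons hvw.symm hw h.symm).symm

theorem exists_adj_of_ne (h : G.ReachableIn s u v) (huv : u ≠ v) : ∃ w ∈ s, G.Adj u w := by
  obtain ⟨p, hp⟩ := h
  cases p with
  | nil => exact absurd rfl huv
  | cons hadj q => exact ⟨_, hp _ (by simp), hadj⟩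

theorem reachableIn_setOf (h : G.ReachableIn s u v) :
    G.ReachableIn {x | G.ReachableIn s u x} u v := by
  classical
  obtain ⟨p, hp⟩ := h
  exact ⟨p, fun z hz =>
    ⟨p.takeUntil z hz, fun y hy => hp y (p.support_takeUntil_subset_support hz hy)⟩⟩

/-- A walk to `u` that starts outside `t` can be cut at its first step into `t`, which by
hypothesis leaves from `u`. -/
theorem sdiff (h : G.ReachableIn s v u) (hv : v ∉ t)
    (ht : ∀ a b, G.Adj a b → a ∈ s → a ∉ t → b ∈ t → a = u) :
    G.ReachableIn (s \ t) v u := by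
  obtain ⟨p, hp⟩ := h
  induction p with
  | nil => exact refl ⟨hp _ (by simp), hv⟩
  | @cons a b _ hab q ih =>
    have ha : a ∈ s := hp a (by simp)
    by_cases hb : b ∈ t
    · obtain rfl := ht a b hab ha hv hb
      exact refl ⟨ha, hv⟩
    · exact cons hab ⟨ha, hv⟩ (ih hb ht fun z hz => hp z (by simp [hz]))

end ReachableIn

theorem dist_le_three_of_adj {a b u c : V} (ha : a = u ∨ G.Adj u a) (huc : G.Adj u c)
    (hb : b = c ∨ G.Adj c b) : G.dist a b ≤ 3 := by
  have walk_le_one : ∀ {x y : V}, x = y ∨ G.Adj y x → ∃ p : G.Walk x y, p.length ≤ 1 := by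
    rintro x y (rfl | h)
    exacts [⟨.nil, by simp⟩, ⟨h.symm.toWalk, by simp⟩]
  obtain ⟨p, hp⟩ := walk_le_one ha
  obtain ⟨q, hq⟩ := walk_le_one hb
  calc G.dist a b ≤ (p.append (.cons huc q.reverse)).length := dist_le _
    _ ≤ 3 := by simp only [Walk.length_append, Walk.length_cons, Walk.length_reverse]; omega

variable (G)

/-- A Hamiltonian path of the cube of `G` restricted to `S`, starting at `u`. Ending at `u` or at
a neighbour of `u` is what lets two such paths be glued through an edge (`append_reverse`). -/
structure IsCubeTour (S : Finset V) (u : V) (l : List V) : Prop where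
  head?_eq : l.head? = some u
  nodup : l.Nodup
  mem_iff : ∀ x, x ∈ l ↔ x ∈ S
  isChain : l.IsChain fun a b => G.dist a b ≤ 3
  getLast?_near : ∀ z ∈ l.getLast?, z = u ∨ G.Adj u z

variable {G}

theorem isCubeTour_singleton (u : V) : G.IsCubeTour {u} u [u] where
  head?_eq := rfl
  nodup := List.nodup_singleton u
  mem_iff := by simp
  isChain := List.isChain_singleton u
  getLast?_near := by simp

theorem IsCubeTour.append_reverse [DecidableEq V] {R C : Finset V} {u c : V} {l m : List V}
    (hl : G.IsCubeTour R u l) (hm : G.IsCubeTour C c m) (huc : G.Adj u c)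
    (hRC : Disjoint R C) : G.IsCubeTour (R ∪ C) u (l ++ m.reverse) where
  head?_eq := by rw [List.head?_append, hl.head?_eq, Option.some_or]
  nodup := List.nodup_append.2 ⟨hl.nodup, List.nodup_reverse.2 hm.nodup, fun x hxl y hym hxy =>
    Finset.disjoint_left.1 hRC ((hl.mem_iff x).1 hxl)
      (hxy ▸ (hm.mem_iff y).1 (List.mem_reverse.1 hym))⟩
  mem_iff x := by simp [hl.mem_iff, hm.mem_iff]
  isChain := by
    refine hl.isChain.append ?_ fun x hx y hy => ?_
    · exact List.isChain_reverse.2 (hm.isChain.imp fun a b h => by rwa [dist_comm])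
    · rw [List.head?_reverse] at hy
      exact dist_le_three_of_adj (hl.getLast?_near x hx) huc (hm.getLast?_near y hy)
  getLast?_near z hz := by
    rw [List.getLast?_append, List.getLast?_reverse, hm.head?_eq, Option.some_or,
      Option.mem_some_iff] at hz
    exact Or.inr (hz ▸ huc)

theorem exists_isCubeTour (S : Finset V) {u : V} (hu : u ∈ S)
    (hS : ∀ x ∈ S, G.ReachableIn S u x) : ∃ l, G.IsCubeTour S u l := by
  classical
  induction S using Finset.strongInduction generalizing u with
  | H S ih =>
  obtain hSu | hS_nt := S.eq_singleton_or_nontrivial hu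
  · exact ⟨[u], hSu ▸ isCubeTour_singleton u⟩
  obtain ⟨x, hx, hxu⟩ := Set.Nontrivial.exists_ne hS_nt u
  obtain ⟨c, hcS, huc⟩ := (hS x hx).exists_adj_of_ne hxu.symm
  set C := (S.erase u).filter (G.ReachableIn (S.erase u) c)
  have hc : c ∈ S.erase u := Finset.mem_erase.2 ⟨huc.ne.symm, hcS⟩
  have hcC : c ∈ C := Finset.mem_filter.2 ⟨hc, .refl hc⟩
  have hCS : C ⊆ S := (Finset.filter_subset _ _).trans (Finset.erase_subset u S)
  have huC : u ∉ C := fun h => (Finset.mem_erase.1 (Finset.mem_filter.1 h).1).1 rfl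
  obtain ⟨m, hm⟩ := ih C (Finset.ssubset_iff_subset_ne.2 ⟨hCS, fun h => huC (h ▸ hu)⟩) hcC
    fun y hy => (Finset.mem_filter.1 hy).2.reachableIn_setOf.mono
      fun z hz => Finset.mem_filter.2 ⟨hz.mem_right, hz⟩
  have hC_closed : ∀ a b, G.Adj a b → a ∈ (S : Set V) → a ∉ (C : Set V) → b ∈ (C : Set V) →
      a = u := by
    intro a b hab ha haC hbC
    by_contra hau
    have ha' : a ∈ S.erase u := Finset.mem_erase.2 ⟨hau, ha⟩
    exact haC (Finset.mem_filter.2 ⟨ha', (Finset.mem_filter.1 hbC).2.trans_adj hab.symm ha'⟩)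
  obtain ⟨l, hl⟩ := ih (S \ C) (Finset.sdiff_ssubset hCS ⟨c, hcC⟩) (Finset.mem_sdiff.2 ⟨hu, huC⟩)
    fun y hy => by
      have hy' := Finset.mem_sdiff.1 hy
      simpa using ((hS y hy'.1).symm.sdiff hy'.2 hC_closed).symm
  refine ⟨l ++ m.reverse, ?_⟩
  simpa [Finset.sdiff_union_of_subset hCS] using hl.append_reverse hm huc Finset.sdiff_disjoint

end SimpleGraph

/-- If `G` is a finite connected graph with `n` vertices, there is an enumeration
`v_1, …, v_n` of the vertices such that consecutive vertices are at distance at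
most 3. -/
theorem exists_enumeration_dist_le_three {V : Type*} [Fintype V]
    (G : SimpleGraph V) (hG : G.Connected) :
    ∃ e : Fin (Fintype.card V) ≃ V,
      ∀ (i : ℕ) (h : i + 1 < Fintype.card V),
        G.dist (e ⟨i, Nat.lt_of_succ_lt h⟩) (e ⟨i + 1, h⟩) ≤ 3 := by
  classical
  obtain ⟨u⟩ := hG.nonempty
  obtain ⟨l, hl⟩ := G.exists_isCubeTour Finset.univ (Finset.mem_univ u)
    fun x _ => ⟨(hG.preconnected u x).some, by simp⟩
  exact hl.isChain.exists_equiv_fin hl.nodup fun x => (hl.mem_iff x).2 (Finset.mem_univ x)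
end

section
/- If T is a tree, then the cube of T contains a Hamiltonian path. -/
/-!
The cube of any connected finite graph `G` has a Hamiltonian path, found by depth-first search.
Call a path of `G³` from `r` a tour if it ends at `r` or at a neighbour of `r`. Given a neighbour
`c` of `r`, take a tour `p₁` from `c` through what the search reaches from `c`, and a tour `p₂` from
`r` through what is left. Their last vertices `b₁`, `b₂` satisfy `b₂ ~ r ~ c ~ b₁` (up to
equalities), so `p₂`, then `p₁` reversed, is a tour from `r` ending at the neighbour `c`.
-/

namespace SimpleGraph

variable {V : Type*} {G : SimpleGraph V}

lemma cube_adj_of_adj {a b x y : V} (hab : a ≠ b) (hxa : x = a ∨ G.Adj x a) (hxy : G.Adj x y)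
    (hyb : y = b ∨ G.Adj y b) : G.cube.Adj a b := by
  have walk_of_eq_or_adj {u v : V} (h : u = v ∨ G.Adj u v) : ∃ w : G.Walk u v, w.length ≤ 1 := by
    rcases h with rfl | h
    exacts [⟨.nil, by simp⟩, ⟨h.toWalk, by simp⟩]
  obtain ⟨wa, hwa⟩ := walk_of_eq_or_adj hxa
  obtain ⟨wb, hwb⟩ := walk_of_eq_or_adj hyb
  have hdist := dist_le (wa.reverse.append (.cons hxy wb))
  simp only [Walk.length_append, Walk.length_reverse, Walk.length_cons] at hdist
  exact (fromRel_adj _ a b).mpr ⟨hab, .inl (by omega)⟩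

variable [DecidableEq V]

/-- The `closed` field says that `p` visits the whole component of `r` in `G[insert r s]`. -/
structure IsCubeTour_s2 {r b : V} (s : Finset V) (p : G.cube.Walk r b) : Prop where
  isPath : p.IsPath
  end_near : r = b ∨ G.Adj r b
  support_subset : ∀ x ∈ p.support, x ∈ insert r s
  closed : ∀ x ∈ p.support, ∀ y ∈ s, G.Adj x y → y ∈ p.support

lemma IsCubeTour_s2.append {r c b₁ b₂ : V} {s : Finset V} (hr : r ∉ s) (hc : c ∈ s) (hrc : G.Adj r c)
    {p₁ : G.cube.Walk c b₁} (hp₁ : IsCubeTour_s2 (s.erase c) p₁)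
    {p₂ : G.cube.Walk r b₂} (hp₂ : IsCubeTour_s2 (s.filter (· ∉ p₁.support)) p₂) :
    ∃ h : G.cube.Adj b₂ b₁, IsCubeTour_s2 s (p₂.append (.cons h p₁.reverse)) := by
  have mem_p₁ : ∀ x ∈ p₁.support, x ∈ s := fun x hx => by
    have := hp₁.support_subset x hx
    simp only [Finset.mem_insert, Finset.mem_erase] at this
    rcases this with rfl | ⟨-, hx⟩
    exacts [hc, hx]
  have mem_p₂ : ∀ x ∈ p₂.support, x = r ∨ (x ∈ s ∧ x ∉ p₁.support) := fun x hx => by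
    simpa using hp₂.support_subset x hx
  have disjoint : ∀ x ∈ p₂.support, x ∉ p₁.support := fun x hx hx₁ => by
    rcases mem_p₂ x hx with rfl | ⟨-, hx⟩
    exacts [hr (mem_p₁ x hx₁), hx hx₁]
  have hadj : G.cube.Adj b₂ b₁ :=
    cube_adj_of_adj (fun h => disjoint b₂ p₂.end_mem_support (h ▸ p₁.end_mem_support))
      hp₂.end_near hrc hp₁.end_near
  have support_eq :
      (p₂.append (.cons hadj p₁.reverse)).support = p₂.support ++ p₁.support.reverse := by
    simp [Walk.support_append]
  have mem_support {x : V} :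
      x ∈ (p₂.append (.cons hadj p₁.reverse)).support ↔ x ∈ p₂.support ∨ x ∈ p₁.support := by
    simp [support_eq]
  refine ⟨hadj, ⟨?_, .inr hrc, ?_, ?_⟩⟩
  · refine Walk.IsPath.mk' ?_
    rw [support_eq, List.nodup_append]
    exact ⟨hp₂.isPath.support_nodup, List.nodup_reverse.mpr hp₁.isPath.support_nodup,
      fun x hx y hy hxy => disjoint x hx (hxy ▸ List.mem_reverse.mp hy)⟩
  · intro x hx
    rcases mem_support.mp hx with hx | hx
    · rcases mem_p₂ x hx with rfl | ⟨hx, -⟩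
      exacts [Finset.mem_insert_self _ _, Finset.mem_insert_of_mem hx]
    · exact Finset.mem_insert_of_mem (mem_p₁ x hx)
  · intro x hx y hy hxy
    rw [mem_support] at hx ⊢
    by_cases hy₁ : y ∈ p₁.support
    · exact .inr hy₁
    rcases hx with hx | hx
    · exact .inl (hp₂.closed x hx y (by simp [hy, hy₁]) hxy)
    · refine .inr (hp₁.closed x hx y (Finset.mem_erase.mpr ⟨?_, hy⟩) hxy)
      rintro rfl
      exact hy₁ p₁.start_mem_support

lemma exists_isCubeTour_s2 (s : Finset V) (r : V) (hr : r ∉ s) :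
    ∃ (b : V) (p : G.cube.Walk r b), IsCubeTour_s2 s p := by
  induction s using Finset.strongInduction generalizing r with
  | H s ih =>
  by_cases hnbr : ∃ c ∈ s, G.Adj r c
  · obtain ⟨c, hc, hrc⟩ := hnbr
    obtain ⟨b₁, p₁, hp₁⟩ := ih (s.erase c) (Finset.erase_ssubset hc) c (Finset.notMem_erase c s)
    have hsub : s.filter (· ∉ p₁.support) ⊂ s :=
      Finset.filter_ssubset.mpr ⟨c, hc, not_not.mpr p₁.start_mem_support⟩
    obtain ⟨b₂, p₂, hp₂⟩ := ih _ hsub r (fun h => hr (Finset.mem_of_mem_filter r h))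
    obtain ⟨_, hp⟩ := IsCubeTour_s2.append hr hc hrc hp₁ hp₂
    exact ⟨c, _, hp⟩
  · push Not at hnbr
    refine ⟨r, .nil, ⟨.nil, .inl rfl, by simp, ?_⟩⟩
    intro x hx y hy hxy
    rw [Walk.support_nil, List.mem_singleton] at hx
    exact absurd (hx ▸ hxy) (hnbr y hy)

lemma IsCubeTour_s2.isHamiltonian [Fintype V] (hG : G.Connected) {r b : V}
    {p : G.cube.Walk r b} (hp : IsCubeTour_s2 (Finset.univ.erase r) p) : p.IsHamiltonian := by
  refine hp.isPath.isHamiltonian_of_mem fun v => by_contra fun hv => ?_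
  obtain ⟨d, -, hd₁, hd₂⟩ :=
    (hG.preconnected r v).some.exists_boundary_dart {x | x ∈ p.support} p.start_mem_support hv
  refine hd₂ ?_
  by_cases hd : d.snd = r
  · exact hd ▸ p.start_mem_support
  · exact hp.closed _ hd₁ _ (Finset.mem_erase.mpr ⟨hd, Finset.mem_univ _⟩) d.adj

theorem Connected.exists_isHamiltonian_cube [Fintype V] (hG : G.Connected) :
    ∃ (u v : V) (p : G.cube.Walk u v), p.IsHamiltonian := by
  obtain ⟨r⟩ := hG.nonempty
  obtain ⟨b, p, hp⟩ := exists_isCubeTour_s2 (G := G) (Finset.univ.erase r) r (Finset.notMem_erase r _)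
  exact ⟨r, b, p, hp.isHamiltonian hG⟩

end SimpleGraph

theorem cube_of_tree_hamiltonian_path_general {V : Type*} [Fintype V] [DecidableEq V]
    (T : SimpleGraph V) (hT : T.IsTree) :
    ∃ (u v : V) (p : T.cube.Walk u v), p.IsHamiltonian :=
  hT.connected.exists_isHamiltonian_cube

/-- If `T` is a (nonempty finite) tree, then its cube contains a Hamiltonian path. -/
theorem cube_of_tree_hamiltonian_path {V : Type*} [Fintype V] [DecidableEq V] [Nonempty V]
    (T : SimpleGraph V) (hT : T.IsTree) :
    ∃ (u v : V) (p : T.cube.Walk u v), p.IsHamiltonian :=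
  cube_of_tree_hamiltonian_path_general T hT
end

section
/- Let G be a connected graph and v a vertex lying on at least one cycle. If g_v denotes the length of a shortest cycle through v, then there exists a vertex u on such a cycle such that in the wave started at u, vertex v receives the wave signal either from two distinct neighbors at the same time d (and then g_v ≤ 2d) or from two distinct neighbors at times d and d+1 (and then g_v ≤ 2d+1); conversely such double receptions certify cycles through v of the stated lengths. -/
/-!
Let `c` be a shortest cycle through `v`, of length `g`, and `u` the vertex `⌊g/2⌋` steps along
it. The two arcs of `c` are paths from `v` to `u` of lengths `⌊g/2⌋` and `⌈g/2⌉` leaving `v`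
through distinct neighbours `w₁`, `w₂`. Two paths from `v` to a common vertex that leave `v` by
different edges close up a cycle through `v` of at most their total length; so a shortcut from
`u` to `wᵢ` (combined with the other arc, or, if it passes through `v`, with one of the arcs)
would produce a cycle through `v` shorter than `g`. Hence the wave from `u` reaches `v` via `w₁`
and `w₂` exactly at times `⌊g/2⌋` and `⌈g/2⌉`. Conversely, `v w₁ ⋯ u ⋯ w₂ v` built from shortest
paths is a closed walk of the stated length.
-/

namespace SimpleGraph

variable {V : Type*} {G : SimpleGraph V}

namespace Walk

lemma IsPath.exists_isCycle_of_snd_ne {u v : V} {p q : G.Walk u v} (hp : p.IsPath)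
    (hq : q.IsPath) (h : p.snd ≠ q.snd) :
    ∃ c : G.Walk u u, c.IsCycle ∧ c.length ≤ p.length + q.length := by
  classical
  cases p with
  | nil => exact absurd (by rw [(isPath_iff_nil.mp hq).eq_nil]) h
  | @cons _ a _ hadj p =>
    obtain ⟨hp, hu⟩ := (cons_isPath_iff _ _).mp hp
    -- The first edge `s(u, a)` is not reused: `p` avoids `u`, and `q` leaves `u` elsewhere.
    have hedge : s(u, a) ∉ (p.append q.reverse).bypass.edges := fun he => by
      rcases List.mem_append.mp (edges_append p q.reverse ▸ edges_bypass_subset_edges _ he)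
        with he | he
      · exact hu (p.fst_mem_support_of_mem_edges he)
      · exact h (by rw [snd_cons]; exact hq.eq_snd_of_mem_edges (by simpa using he))
    refine ⟨cons hadj (p.append q.reverse).bypass,
      (cons_isCycle_iff _ _).mpr ⟨bypass_isPath _, hedge⟩, ?_⟩
    have := (p.append q.reverse).length_bypass_le_length
    simp only [length_cons, length_append, length_reverse] at this ⊢
    omega

lemma IsPath.dist_snd_add_one_eq_length {v u : V} {p q : G.Walk v u} (hp : p.IsPath)
    (hq : q.IsPath) (hsnd : p.snd ≠ q.snd) (hpq : p.length ≤ q.length + 1)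
    (hmin : ∀ c : G.Walk v v, c.IsCycle → p.length + q.length ≤ c.length) :
    G.dist p.snd u + 1 = p.length := by
  classical
  have hnil : ¬ p.Nil := by
    cases p with
    | nil => exact fun _ => hsnd (by rw [(isPath_iff_nil.mp hq).eq_nil])
    | cons => exact not_nil_cons
  have hadj : G.Adj v p.snd := adj_snd hnil
  have hle : G.dist p.snd u + 1 ≤ p.length :=
    (length_tail_add_one hnil) ▸ Nat.add_le_add_right (dist_le p.tail) 1
  obtain ⟨S, hS, hSlen⟩ := Reachable.exists_path_of_dist (⟨p.tail⟩ : G.Reachable p.snd u)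
  refine le_antisymm hle (not_lt.mp fun hlt => ?_)
  by_cases hv : v ∈ S.support
  · have hT := S.length_dropUntil_lt_length hv hadj.ne
    by_cases hTp : (S.dropUntil v hv).snd = p.snd
    · obtain ⟨c, hc, hclen⟩ := (hS.dropUntil hv).exists_isCycle_of_snd_ne hq (by rwa [hTp])
      have := hmin c hc
      omega
    · obtain ⟨c, hc, hclen⟩ := (hS.dropUntil hv).exists_isCycle_of_snd_ne hp hTp
      have := hmin c hc
      omega
  · obtain ⟨c, hc, hclen⟩ :=
      (hS.cons hv (h := hadj)).exists_isCycle_of_snd_ne hq (by simpa using hsnd)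
    have := hmin c hc
    simp only [length_cons] at hclen
    omega

lemma IsCycle.dist_snd_penultimate_of_forall_le {v : V} {c : G.Walk v v} (hc : c.IsCycle)
    (hmin : ∀ q : G.Walk v v, q.IsCycle → c.length ≤ q.length) :
    G.dist (c.getVert (c.length / 2)) c.snd + 1 = c.length / 2 ∧
      G.dist (c.getVert (c.length / 2)) c.penultimate + 1 = c.length - c.length / 2 := by
  have h3 := hc.three_le_length
  set m := c.length / 2
  have hA : (c.take m).IsPath := hc.isPath_take (by omega)
  have hB : (c.drop m).reverse.IsPath := (hc.isPath_drop (by omega)).reverse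
  have hAlen : (c.take m).length = m := by rw [take_length]; omega
  have hBlen : (c.drop m).reverse.length = c.length - m := by rw [length_reverse, drop_length]
  have hAsnd : (c.take m).snd = c.snd := by
    simp only [snd, take_getVert]
    congr 1
    omega
  have hBsnd : (c.drop m).reverse.snd = c.penultimate := by
    simp only [snd_reverse, penultimate, drop_getVert, drop_length]
    congr 1
    omega
  have hsnd : (c.take m).snd ≠ (c.drop m).reverse.snd := hAsnd ▸ hBsnd ▸ hc.snd_ne_penultimate
  have h₁ := hA.dist_snd_add_one_eq_length hB hsnd (by omega)
    fun q hq => (hmin q hq).trans' (by omega)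
  have h₂ := hB.dist_snd_add_one_eq_length hA hsnd.symm (by omega)
    fun q hq => (hmin q hq).trans' (by omega)
  rw [dist_comm, hAsnd] at h₁
  rw [dist_comm, hBsnd] at h₂
  omega

end Walk

lemma Reachable.exists_walk_mem_support_length_eq {v u w₁ w₂ : V} (hu : G.Reachable v u)
    (h₁ : G.Adj v w₁) (h₂ : G.Adj v w₂) :
    ∃ p : G.Walk v v, u ∈ p.support ∧ p.length = G.dist u w₁ + G.dist u w₂ + 2 := by
  obtain ⟨W₁, hW₁⟩ := (h₁.reachable.symm.trans hu).exists_walk_length_eq_dist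
  obtain ⟨W₂, hW₂⟩ := (hu.symm.trans h₂.reachable).exists_walk_length_eq_dist
  refine ⟨.cons h₁ (W₁.append (W₂.concat h₂.symm)), by simp, ?_⟩
  simp only [Walk.length_cons, Walk.length_append, Walk.length_concat, hW₁, hW₂, dist_comm]
  omega

end SimpleGraph

theorem wave_girth_through_vertex_general {V : Type*}
    (G : SimpleGraph V) (hG : G.Connected) (v : V)
    (hcyc : ∃ p : G.Walk v v, p.IsCycle) :
    (∃ (u : V) (p : G.Walk v v), p.IsCycle ∧
        p.length = sInf {n : ℕ | ∃ q : G.Walk v v, q.IsCycle ∧ q.length = n} ∧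
        u ∈ p.support ∧
        ∃ (w₁ w₂ : V) (d : ℕ), w₁ ≠ w₂ ∧ G.Adj v w₁ ∧ G.Adj v w₂ ∧
          ((G.dist u w₁ + 1 = d ∧ G.dist u w₂ + 1 = d ∧
              sInf {n : ℕ | ∃ q : G.Walk v v, q.IsCycle ∧ q.length = n} ≤ 2 * d) ∨
           (G.dist u w₁ + 1 = d ∧ G.dist u w₂ + 1 = d + 1 ∧
              sInf {n : ℕ | ∃ q : G.Walk v v, q.IsCycle ∧ q.length = n} ≤ 2 * d + 1))) ∧
    (∀ (u w₁ w₂ : V) (d : ℕ), w₁ ≠ w₂ → G.Adj v w₁ → G.Adj v w₂ →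
        ((G.dist u w₁ + 1 = d ∧ G.dist u w₂ + 1 = d) →
            ∃ p : G.Walk v v, u ∈ p.support ∧ p.length = 2 * d) ∧
        ((G.dist u w₁ + 1 = d ∧ G.dist u w₂ + 1 = d + 1) →
            ∃ p : G.Walk v v, u ∈ p.support ∧ p.length = 2 * d + 1)) := by
  refine ⟨?_, fun u w₁ w₂ d _ h₁ h₂ => ?_⟩
  · obtain ⟨q, hq⟩ := hcyc
    obtain ⟨c, hc, hclen⟩ := Nat.sInf_mem (s := {n | ∃ q : G.Walk v v, q.IsCycle ∧ q.length = n})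
      ⟨q.length, q, hq, rfl⟩
    obtain ⟨h₁, h₂⟩ := hc.dist_snd_penultimate_of_forall_le
      fun q hq => hclen ▸ Nat.sInf_le ⟨q, hq, rfl⟩
    refine ⟨c.getVert (c.length / 2), c, hc, hclen, c.getVert_mem_support _, c.snd,
      c.penultimate, c.length / 2, hc.snd_ne_penultimate, c.adj_snd hc.not_nil, (c.adj_penultimate hc.not_nil).symm, ?_⟩
    rw [← hclen]
    omega
  · obtain ⟨p, hu, hp⟩ := (hG.preconnected v u).exists_walk_mem_support_length_eq h₁ h₂
    exact ⟨fun ⟨hd₁, hd₂⟩ => ⟨p, hu, by omega⟩, fun ⟨hd₁, hd₂⟩ => ⟨p, hu, by omega⟩⟩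

/-- Wave-based computation of the shortest cycle length through a vertex `v`.
If `v` lies on a cycle and `g_v = sInf {length of cycles through v}`, then some
vertex `u` on a shortest such cycle is a wave source whose wave reaches `v` via
two distinct neighbours at times `d, d` (certifying `g_v ≤ 2d`) or at times
`d, d+1` (certifying `g_v ≤ 2d+1`); here the wave from `u` reaches `v` via a
neighbour `w` at time `dist(u,w) + 1`.  Conversely, any such double reception
certifies a closed walk through `v` and `u` of length `2d` (resp. `2d+1`). -/
theorem wave_girth_through_vertex {V : Type*} [Fintype V] [DecidableEq V]
    (G : SimpleGraph V) (hG : G.Connected) (v : V)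
    (hcyc : ∃ p : G.Walk v v, p.IsCycle) :
    (∃ (u : V) (p : G.Walk v v), p.IsCycle ∧
        p.length = sInf {n : ℕ | ∃ q : G.Walk v v, q.IsCycle ∧ q.length = n} ∧
        u ∈ p.support ∧
        ∃ (w₁ w₂ : V) (d : ℕ), w₁ ≠ w₂ ∧ G.Adj v w₁ ∧ G.Adj v w₂ ∧
          ((G.dist u w₁ + 1 = d ∧ G.dist u w₂ + 1 = d ∧
              sInf {n : ℕ | ∃ q : G.Walk v v, q.IsCycle ∧ q.length = n} ≤ 2 * d) ∨
           (G.dist u w₁ + 1 = d ∧ G.dist u w₂ + 1 = d + 1 ∧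
              sInf {n : ℕ | ∃ q : G.Walk v v, q.IsCycle ∧ q.length = n} ≤ 2 * d + 1))) ∧
    (∀ (u w₁ w₂ : V) (d : ℕ), w₁ ≠ w₂ → G.Adj v w₁ → G.Adj v w₂ →
        ((G.dist u w₁ + 1 = d ∧ G.dist u w₂ + 1 = d) →
            ∃ p : G.Walk v v, u ∈ p.support ∧ p.length = 2 * d) ∧
        ((G.dist u w₁ + 1 = d ∧ G.dist u w₂ + 1 = d + 1) →
            ∃ p : G.Walk v v, u ∈ p.support ∧ p.length = 2 * d + 1)) :=
  wave_girth_through_vertex_general G hG v hcyc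
end
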